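/- Every compact subset of the group G is finite. -/

import Mathlib

/-!
By Specker's theorem a homomorphism `φ : ℤ^ℕ → ℤ` kills all but finitely many unit vectors
`e n` and is determined by its values on them; in particular it is continuous for the product
topology on `ℤ^ℕ`. A compact `K ⊆ G` is pointwise bounded, so by the Baire category theorem one
of the closed sets `{x | ∀ g ∈ K, |g x| ≤ n}` contains a cylinder. Moving inside that cylinder
along `e i`, with `i` beyond its length, shows that every `g ∈ K` kills `e i` for all large `i`.
Hence `K` embeds into the finite product of the finite sets `{g (e i) | g ∈ K}`, `i < m`.
-/

/-- The topology of pointwise convergence on `G = Hom(ℤ^ℕ, ℤ)`. -/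
noncomputable instance : TopologicalSpace ((ℕ → ℤ) →+ ℤ) :=
  TopologicalSpace.induced (fun g : (ℕ → ℤ) →+ ℤ => (g : (ℕ → ℤ) → ℤ)) Pi.topologicalSpace

open Finset Function

theorem Int.eq_zero_of_forall_pow_dvd {p n : ℤ} (hp : 2 ≤ p) (h : ∀ k : ℕ, p ^ k ∣ n) :
    n = 0 := by
  by_contra hn
  have hp1 : p.natAbs ≠ 1 := by omega
  obtain ⟨k, hk⟩ := Int.finiteMultiplicity_iff.mpr ⟨hp1, hn⟩
  exact hk (h _)

theorem Function.ExtendByZero.hom_single {ι η R : Type*} [DecidableEq ι] [DecidableEq η]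
    [AddZeroClass R] {f : ι → η} (hf : Injective f) (i : ι) (r : R) :
    ExtendByZero.hom R f (Pi.single i r) = Pi.single (f i) r := by
  funext j
  rw [ExtendByZero.hom_apply]
  by_cases hj : ∃ a, f a = j
  · obtain ⟨a, rfl⟩ := hj
    simp [hf.extend_apply, Pi.single_apply, hf.eq_iff]
  · rw [extend_apply' _ _ _ hj, Pi.single_apply, if_neg fun h => hj ⟨i, h.symm⟩]
    rfl

namespace Specker

theorem dvd_map_of_forall_dvd {ι : Type*} (φ : (ι → ℤ) →+ ℤ) {d : ℤ} {y : ι → ℤ}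
    (h : ∀ i, d ∣ y i) : d ∣ φ y := by
  choose u hu using h
  rw [show y = d • u from funext hu, map_zsmul, smul_eq_mul]
  exact dvd_mul_right _ _

theorem dvd_map_sub_sum_of_forall_ge_dvd (φ : (ℕ → ℤ) →+ ℤ) {d : ℤ} {x : ℕ → ℤ} {k : ℕ}
    (h : ∀ i, k ≤ i → d ∣ x i) :
    d ∣ φ x - ∑ i ∈ range k, x i * φ (Pi.single i 1) := by
  have hsub : φ x - ∑ i ∈ range k, x i * φ (Pi.single i 1)
      = φ (x - ∑ i ∈ range k, x i • Pi.single i 1) := by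
    simp only [map_sub, map_sum, map_zsmul, smul_eq_mul]
  rw [hsub]
  refine dvd_map_of_forall_dvd φ fun j => ?_
  by_cases hj : j < k
  · simp [Finset.sum_apply, Pi.single_apply, hj]
  · simpa [Finset.sum_apply, Pi.single_apply, hj] using h j (not_lt.1 hj)

theorem eq_zero_of_map_single_eq_zero {φ : (ℕ → ℤ) →+ ℤ}
    (h : ∀ n, φ (Pi.single n 1) = 0) : φ = 0 := by
  have hpow : ∀ p : ℤ, 2 ≤ p → ∀ x : ℕ → ℤ, (∀ i, p ^ i ∣ x i) → φ x = 0 := by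
    intro p hp x hx
    refine Int.eq_zero_of_forall_pow_dvd hp fun k => ?_
    simpa [h] using dvd_map_sub_sum_of_forall_ge_dvd φ (k := k)
      fun i hi => (pow_dvd_pow p hi).trans (hx i)
  refine DFunLike.ext _ _ fun x => ?_
  have hsplit : ∀ n, ∃ u v : ℤ, x n = 2 ^ n * u + 3 ^ n * v := fun n => by
    obtain ⟨a, b, hab⟩ := (Int.isCoprime_iff_gcd_eq_one.mpr rfl : IsCoprime (2 : ℤ) 3).pow
      (m := n) (n := n)
    exact ⟨a * x n, b * x n, by linear_combination (-x n) * hab⟩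
  choose u v huv using hsplit
  rw [show x = (fun n => 2 ^ n * u n) + (fun n => 3 ^ n * v n) from funext huv, map_add,
    hpow 2 le_rfl _ fun i => dvd_mul_right _ _, hpow 3 (by norm_num) _ fun i => dvd_mul_right _ _]
  rfl

theorem ext_map_single {φ ψ : (ℕ → ℤ) →+ ℤ}
    (h : ∀ n, φ (Pi.single n 1) = ψ (Pi.single n 1)) : φ = ψ :=
  sub_eq_zero.1 (eq_zero_of_map_single_eq_zero fun n => by simp [h n])

theorem eq_sum_of_forall_ge_map_single_eq_zero (φ : (ℕ → ℤ) →+ ℤ) {N : ℕ}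
    (h : ∀ i, N ≤ i → φ (Pi.single i 1) = 0) (x : ℕ → ℤ) :
    φ x = ∑ i ∈ range N, x i * φ (Pi.single i 1) := by
  have hφ : φ = ∑ i ∈ range N, φ (Pi.single i 1) • Pi.evalAddMonoidHom (fun _ => ℤ) i := by
    refine ext_map_single fun n => ?_
    by_cases hn : n < N
    · simp [Pi.single_apply, hn]
    · simp [Pi.single_apply, hn, h n (not_lt.1 hn)]
  simpa [mul_comm] using DFunLike.congr_fun hφ x

theorem not_forall_map_single_ne_zero (φ : (ℕ → ℤ) →+ ℤ) :
    ¬ ∀ n, φ (Pi.single n 1) ≠ 0 := by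
  intro ha
  -- With `x i = sign (a i) * D i`, `φ x ≡ s k [ZMOD D k]` while `k ≤ s k` and `s k + k < D k`;
  -- take `k = |φ x| + 1`.
  set a : ℕ → ℤ := fun n => φ (Pi.single n 1)
  set D : ℕ → ℤ := fun k => ∏ i ∈ range k, 2 * (|a i| + 1)
  set s : ℕ → ℤ := fun k => ∑ i ∈ range k, |a i| * D i
  set x : ℕ → ℤ := fun i => (a i).sign * D i
  have hbounds : ∀ k : ℕ, (k : ℤ) ≤ s k ∧ s k + k < D k := by
    intro k
    induction k with
    | zero => simp [s, D]
    | succ k ih =>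
      have h1 : 1 ≤ |a k| := Int.one_le_abs (ha k)
      have h2 : s (k + 1) = s k + |a k| * D k := sum_range_succ _ _
      have h3 : D (k + 1) = D k * (2 * (|a k| + 1)) := prod_range_succ _ _
      rw [h2, h3]
      push_cast
      constructor <;> nlinarith [ih.1, ih.2]
  have hdvd : ∀ k, D k ∣ φ x - s k := by
    intro k
    have hx : ∀ i, k ≤ i → D k ∣ x i := fun i hi =>
      (prod_dvd_prod_of_subset _ _ _ (range_subset_range.2 hi)).mul_left _
    have hxa : ∀ i, x i * a i = |a i| * D i := fun i => by
      rw [← Int.sign_mul_self_eq_abs]; ring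
    convert dvd_map_sub_sum_of_forall_ge_dvd φ hx using 2
    exact (sum_congr rfl fun i _ => hxa i).symm
  obtain ⟨hk1, hk2⟩ := hbounds ((φ x).natAbs + 1)
  have habs : ((φ x).natAbs : ℤ) = |φ x| := Int.natCast_natAbs _
  push_cast at hk1 hk2
  have hlt : |φ x - s ((φ x).natAbs + 1)| < D ((φ x).natAbs + 1) := by
    rw [abs_sub_lt_iff]; constructor <;> linarith [le_abs_self (φ x), neg_abs_le (φ x)]
  have := Int.eq_zero_of_abs_lt_dvd (hdvd _) hlt
  linarith [le_abs_self (φ x)]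

theorem finite_setOf_map_single_ne_zero (φ : (ℕ → ℤ) →+ ℤ) :
    {n | φ (Pi.single n 1) ≠ 0}.Finite := by
  by_contra hinf
  set f : ℕ ↪ {n | φ (Pi.single n 1) ≠ 0} := Set.Infinite.natEmbedding _ hinf
  have hf : Injective fun k => (f k : ℕ) := Subtype.val_injective.comp f.injective
  refine not_forall_map_single_ne_zero (φ.comp (ExtendByZero.hom ℤ fun k => (f k : ℕ)))
    fun k => ?_
  rw [AddMonoidHom.comp_apply, ExtendByZero.hom_single hf]
  exact (f k).2

theorem continuous (φ : (ℕ → ℤ) →+ ℤ) : Continuous φ := by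
  obtain ⟨N, hN⟩ := (finite_setOf_map_single_ne_zero φ).bddAbove
  have hφ : ⇑φ = fun x => ∑ i ∈ range (N + 1), x i * φ (Pi.single i 1) :=
    funext <| eq_sum_of_forall_ge_map_single_eq_zero φ fun i hi => by
      by_contra h
      exact absurd (hN h) (by omega)
  rw [hφ]
  fun_prop

theorem exists_forall_ge_map_single_eq_zero_of_bounded {K : Set ((ℕ → ℤ) →+ ℤ)}
    (hK : ∀ x, ∃ B : ℤ, ∀ g ∈ K, |g x| ≤ B) :
    ∃ m, ∀ g ∈ K, ∀ i, m ≤ i → g (Pi.single i 1) = 0 := by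
  set F : ℕ → Set (ℕ → ℤ) := fun n => {x | ∀ g ∈ K, |g x| ≤ n}
  have hF_closed : ∀ n, IsClosed (F n) := fun n => by
    simp only [F, Set.ofPred_forall]
    exact isClosed_biInter fun g _ => isClosed_le (continuous g).abs continuous_const
  have hF_cover : ⋃ n, F n = Set.univ := by
    refine Set.eq_univ_of_forall fun x => ?_
    obtain ⟨B, hB⟩ := hK x
    exact Set.mem_iUnion.2 ⟨B.toNat, fun g hg => (hB g hg).trans (Int.self_le_toNat B)⟩
  obtain ⟨n, y, hy⟩ := nonempty_interior_of_iUnion_of_closed hF_closed hF_cover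
  obtain ⟨_, ⟨z, m, rfl⟩, hym, hsub⟩ :=
    (PiNat.isTopologicalBasis_cylinders _).exists_subset_of_mem_open hy isOpen_interior
  refine ⟨m, fun g hg i hi => ?_⟩
  have hmem : y + (2 * n + 1 : ℤ) • Pi.single i 1 ∈ F n := by
    refine interior_subset (hsub fun j hj => ?_)
    rw [← hym j hj]
    simp [show j ≠ i by omega]
  have hshift := hmem g hg
  rw [map_add, map_zsmul, smul_eq_mul] at hshift
  by_contra hne
  have : (2 * n + 1 : ℤ) ≤ 2 * n := calc
    (2 * n + 1 : ℤ) ≤ |(2 * n + 1 : ℤ) * g (Pi.single i 1)| := by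
      rw [abs_mul, abs_of_nonneg (by positivity)]
      exact le_mul_of_one_le_right (by positivity) (Int.one_le_abs hne)
    _ ≤ |g y + (2 * n + 1 : ℤ) * g (Pi.single i 1)| + |g y| := by
      simpa using abs_sub (g y + (2 * n + 1 : ℤ) * g (Pi.single i 1)) (g y)
    _ ≤ 2 * n := by linarith [interior_subset hy g hg]
  omega

end Specker

/-- Every compact subset of `G = Hom(ℤ^ℕ, ℤ)` (with the topology of pointwise
convergence) is finite. -/
theorem compact_subsets_finite (K : Set ((ℕ → ℤ) →+ ℤ)) (hK : IsCompact K) :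
    K.Finite := by
  have hfin : ∀ x : ℕ → ℤ, ((fun g : (ℕ → ℤ) →+ ℤ => g x) '' K).Finite := fun x =>
    (hK.image ((continuous_apply x).comp continuous_induced_dom)).finite_of_discrete
  obtain ⟨m, hm⟩ := Specker.exists_forall_ge_map_single_eq_zero_of_bounded fun x => by
    obtain ⟨B, hB⟩ := ((hfin x).image abs).bddAbove
    exact ⟨B, fun g hg => hB ⟨_, ⟨g, hg, rfl⟩, rfl⟩⟩
  have hinj : Set.InjOn (fun g (i : Fin m) => g (Pi.single i 1)) K := fun g hg h hh hgh =>
    Specker.ext_map_single fun n => by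
      by_cases hn : n < m
      · exact congrFun hgh ⟨n, hn⟩
      · rw [hm g hg n (not_lt.1 hn), hm h hh n (not_lt.1 hn)]
  refine Set.Finite.of_finite_image ?_ hinj
  refine (Set.Finite.pi fun i : Fin m => hfin (Pi.single i 1)).subset ?_
  rintro _ ⟨g, hg, rfl⟩ i -
  exact ⟨g, hg, rfl⟩
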